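/- Let x(t) = A e^{i2πξ₀t} with A > 0, ξ₀ > 0, g ∈ 𝒮, σ : ℝ → (0,∞) differentiable, μ ∈ ℝ. Then at every (a,b) with W̃_x(a,b) ≠ 0, the complex adaptive phase transformation ω^{adp,c}_x(a,b) := ∂_bW̃_x/(i2πW̃_x) + σ'(b)/(i2πσ(b)) + (σ'(b)/σ(b)) W̃^{g₃}_x/(i2πW̃_x) equals ξ₀. -/

import Mathlib

/-!
For a pure tone `x t = A e^{2πiξ₀t}` the substitution `t = σ(b) u` turns the adaptive transform
into a Fourier transform: `W(b) = x(b) ĝ(σ(b)ν)` and `W^{g₃}(b) = x(b) 𝓕(t g')(σ(b)ν)`, where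
`ν = μ - aξ₀`. Since `𝓕(t g')(η) = -ĝ(η) - η ĝ'(η)`, the second is `x(b) (-ĝ - σ(b)ν ĝ')(σ(b)ν)`.
Differentiating `W` in `b` gives `2πiξ₀ W` plus the chain-rule term `x(b) σ'(b) ν ĝ'(σ(b)ν)`,
and the two correction terms of the phase transformation cancel that term exactly.
-/

open Real MeasureTheory

/-- The adaptive continuous wavelet transform with window `g`, signal `x`,
time-varying parameter `σ` and frequency parameter `μ`. -/
noncomputable def adCWT (g x : ℝ → ℂ) (σ : ℝ → ℝ) (μ a b : ℝ) : ℂ :=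
  ∫ t : ℝ, x (b + a * t) * ((σ b : ℂ))⁻¹ * g (t / σ b) *
    Complex.exp (-(2 * (π : ℂ) * (μ : ℂ) * (t : ℂ)) * Complex.I)

open FourierTransform Complex

namespace SchwartzMap

variable {E : Type*} [NormedAddCommGroup E] [NormedSpace ℂ E]

theorem integrable_smul_self (g : 𝓢(ℝ, E)) : Integrable (fun t : ℝ => t • g t) :=
  (g.integrable_pow_mul volume 1).mono' (continuous_id.smul g.continuous).aestronglyMeasurable
    (.of_forall fun t => by simp [norm_smul])

theorem hasDerivAt_fourier (g : 𝓢(ℝ, E)) (w : ℝ) :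
    HasDerivAt (𝓕 ⇑g) (𝓕 (fun t : ℝ => (-2 * π * I * t) • g t) w) w :=
  Real.hasDerivAt_fourier g.integrable g.integrable_smul_self w

theorem fourier_ofReal_mul_deriv (g : 𝓢(ℝ, ℂ)) (w : ℝ) :
    𝓕 (fun t : ℝ => (t : ℂ) * deriv g t) w = -𝓕 ⇑g w - w * deriv (𝓕 ⇑g) w := by
  set g' := derivCLM ℝ ℂ g
  have hg' : deriv g = g' := funext fun t => (derivCLM_apply ℝ g t).symm
  have hFg' : 𝓕 ⇑g' = fun w : ℝ => (2 * π * I * w) • 𝓕 ⇑g w := by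
    rw [← hg']
    exact Real.fourier_deriv g.integrable g.differentiable (hg' ▸ g'.integrable)
  -- Differentiate `𝓕 g'` once as a Fourier transform and once through `hFg'`.
  have h₁ := g'.hasDerivAt_fourier w
  have h₂ : HasDerivAt (𝓕 ⇑g') (2 * π * I * 𝓕 ⇑g w + 2 * π * I * w * deriv (𝓕 ⇑g) w) w := by
    rw [hFg']
    have hlin : HasDerivAt (fun w : ℝ => 2 * π * I * (w : ℂ)) (2 * π * I) w := by
      simpa using (hasDerivAt_id (w : ℂ)).comp_ofReal.const_mul (2 * π * I)
    simp only [smul_eq_mul]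
    exact hlin.mul (g.hasDerivAt_fourier w).differentiableAt.hasDerivAt
  have h₃ : 𝓕 (fun t : ℝ => (-2 * π * I * t) • g' t) w
      = -2 * π * I * 𝓕 (fun t : ℝ => (t : ℂ) * g' t) w := by
    simp only [Real.fourier_real_eq_integral_exp_smul, ← integral_const_mul, smul_eq_mul]
    congr 1 with t
    ring
  have h2πI : (-2 * π * I : ℂ) ≠ 0 := by simp [pi_ne_zero, I_ne_zero]
  rw [hg']
  apply mul_left_cancel₀ h2πI
  rw [← h₃, h₁.unique h₂]
  ring

end SchwartzMap

noncomputable def pureTone (A : ℂ) (ξ₀ t : ℝ) : ℂ := A * cexp (I * (2 * π * ((ξ₀ * t : ℝ) : ℂ)))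

theorem hasDerivAt_pureTone (A : ℂ) (ξ₀ t : ℝ) :
    HasDerivAt (pureTone A ξ₀) (I * 2 * π * ξ₀ * pureTone A ξ₀ t) t := by
  have hphase : HasDerivAt (fun t : ℝ => I * (2 * π * ((ξ₀ * t : ℝ) : ℂ))) (I * 2 * π * ξ₀) t := by
    simpa [mul_assoc] using (hasDerivAt_id (t : ℂ)).comp_ofReal.const_mul (I * 2 * π * ξ₀)
  exact (hphase.cexp.const_mul A).congr_deriv (by unfold pureTone; ring)

theorem adCWT_pureTone (φ : ℝ → ℂ) (σ : ℝ → ℝ) (A : ℂ) (ξ₀ μ a b : ℝ) (hσ : 0 < σ b) :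
    adCWT φ (pureTone A ξ₀) σ μ a b
      = pureTone A ξ₀ b * 𝓕 φ (σ b * (μ - a * ξ₀)) := by
  -- `ψ` is the integrand of `𝓕 φ` at `σ b * (μ - a * ξ₀)`; the integrand of `adCWT` is `ψ (t / σ b)`.
  set ψ : ℝ → ℂ := fun u => cexp (↑(-2 * π * u * (σ b * (μ - a * ξ₀))) * I) • φ u
  have hψ : 𝓕 φ (σ b * (μ - a * ξ₀)) = ∫ u, ψ u := Real.fourier_real_eq_integral_exp_smul _ _
  have hkernel : ∀ t : ℝ,
      pureTone A ξ₀ (b + a * t) * ((σ b : ℂ))⁻¹ * φ (t / σ b) * cexp (-(2 * π * μ * t) * I)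
      = (pureTone A ξ₀ b * ((σ b : ℂ))⁻¹) • ψ (t / σ b) := by
    intro t
    have hu : -2 * π * (t / σ b) * (σ b * (μ - a * ξ₀)) = -2 * π * t * (μ - a * ξ₀) := by
      field_simp
    have hphase : cexp (I * (2 * π * ((ξ₀ * (b + a * t) : ℝ) : ℂ))) * cexp (-(2 * π * μ * t) * I)
        = cexp (I * (2 * π * ((ξ₀ * b : ℝ) : ℂ)))
          * cexp (↑(-2 * π * (t / σ b) * (σ b * (μ - a * ξ₀))) * I) := by
      rw [← Complex.exp_add, ← Complex.exp_add, hu]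
      push_cast
      ring_nf
    simp only [pureTone, ψ, smul_eq_mul]
    linear_combination (A * ((σ b : ℂ))⁻¹ * φ (t / σ b)) * hphase
  rw [adCWT, funext hkernel, integral_smul, Measure.integral_comp_div ψ, abs_of_pos hσ, ← hψ,
    Complex.real_smul, smul_eq_mul]
  have hσ' : (σ b : ℂ) ≠ 0 := ofReal_ne_zero.mpr hσ.ne'
  field_simp

theorem adaptivePhase_eq {K : Type*} [Field K] {c ξ s s' ν E P Q : K} (hc : c ≠ 0) (hs : s ≠ 0)
    (hEP : E * P ≠ 0) :
    (c * ξ * E * P + E * (s' * ν * Q)) / (c * (E * P)) + s' / (c * s)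
      + s' / s * (E * (-P - s * ν * Q) / (c * (E * P))) = ξ := by
  have hE : E ≠ 0 := left_ne_zero_of_mul hEP
  have hP : P ≠ 0 := right_ne_zero_of_mul hEP
  field_simp
  ring

theorem stmt_15_general (g : SchwartzMap ℝ ℂ) (σ : ℝ → ℝ) (hσpos : ∀ b, 0 < σ b)
    (hσd : Differentiable ℝ σ) (μ A ξ₀ : ℝ)
    (x : ℝ → ℂ)
    (hx : ∀ t, x t = (A : ℂ) * Complex.exp (Complex.I * (2 * (π : ℂ) * ((ξ₀ * t : ℝ) : ℂ))))
    (W W3 : ℝ → ℝ → ℂ)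
    (hW : ∀ a b, W a b = adCWT (fun t => g t) x σ μ a b)
    (hW3 : ∀ a b, W3 a b =
      adCWT (fun t => (t : ℂ) * deriv (fun s : ℝ => g s) t) x σ μ a b)
    (a b : ℝ) (hW0 : W a b ≠ 0) :
    (deriv (fun b' => W a b') b) / (Complex.I * 2 * (π : ℂ) * W a b)
      + ((deriv σ b : ℝ) : ℂ) / (Complex.I * 2 * (π : ℂ) * ((σ b : ℝ) : ℂ))
      + ((deriv σ b / σ b : ℝ) : ℂ) * (W3 a b / (Complex.I * 2 * (π : ℂ) * W a b))
      = (ξ₀ : ℂ) := by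
  have hx' : x = pureTone A ξ₀ := funext hx
  set ν := μ - a * ξ₀
  set G := 𝓕 (⇑g)
  have hWb : ∀ b', W a b' = pureTone A ξ₀ b' * G (σ b' * ν) := fun b' => by
    rw [hW, hx', adCWT_pureTone _ _ _ _ _ _ _ (hσpos b')]
  have hW3b : W3 a b
      = pureTone A ξ₀ b * (-G (σ b * ν) - (σ b : ℂ) * ν * deriv G (σ b * ν)) := by
    rw [hW3, hx', adCWT_pureTone _ _ _ _ _ _ _ (hσpos b), g.fourier_ofReal_mul_deriv, ofReal_mul]
  have hWd : HasDerivAt (fun b' => W a b') (I * 2 * π * ξ₀ * pureTone A ξ₀ b * G (σ b * ν)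
      + pureTone A ξ₀ b * ((deriv σ b * ν) • deriv G (σ b * ν))) b := by
    rw [funext hWb]
    exact (hasDerivAt_pureTone A ξ₀ b).mul <|
      (g.hasDerivAt_fourier (σ b * ν)).differentiableAt.hasDerivAt.scomp b
        ((hσd b).hasDerivAt.mul_const ν)
  have hc : I * 2 * π ≠ 0 := by simp [pi_ne_zero, I_ne_zero]
  have hσb : (σ b : ℂ) ≠ 0 := ofReal_ne_zero.mpr (hσpos b).ne'
  rw [hWb b] at hW0
  rw [hWd.deriv, hWb b, hW3b, real_smul]
  push_cast
  exact adaptivePhase_eq hc hσb hW0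

theorem stmt_15 (g : SchwartzMap ℝ ℂ) (σ : ℝ → ℝ) (hσpos : ∀ b, 0 < σ b)
    (hσd : Differentiable ℝ σ) (μ A ξ₀ : ℝ) (hA : 0 < A) (hξ₀ : 0 < ξ₀)
    (x : ℝ → ℂ)
    (hx : ∀ t, x t = (A : ℂ) * Complex.exp (Complex.I * (2 * (π : ℂ) * ((ξ₀ * t : ℝ) : ℂ))))
    (W W3 : ℝ → ℝ → ℂ)
    (hW : ∀ a b, W a b = adCWT (fun t => g t) x σ μ a b)
    (hW3 : ∀ a b, W3 a b =
      adCWT (fun t => (t : ℂ) * deriv (fun s : ℝ => g s) t) x σ μ a b)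
    (a b : ℝ) (ha : 0 < a) (hW0 : W a b ≠ 0) :
    (deriv (fun b' => W a b') b) / (Complex.I * 2 * (π : ℂ) * W a b)
      + ((deriv σ b : ℝ) : ℂ) / (Complex.I * 2 * (π : ℂ) * ((σ b : ℝ) : ℂ))
      + ((deriv σ b / σ b : ℝ) : ℂ) * (W3 a b / (Complex.I * 2 * (π : ℂ) * W a b))
      = (ξ₀ : ℂ) :=
  stmt_15_general g σ hσpos hσd μ A ξ₀ x hx W W3 hW hW3 a b hW0
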